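/- Define J(m,n) = 4n²(16m⁴+40m²+1) − 64m⁶ − 48m⁴ + 28m² + 1. For every pair of positive integers m, n with m > n, one has J(m,n) < 0. -/
import Mathlib

/-- The polynomial `J(m,n)`. -/
def J (m n : ℝ) : ℝ :=
  4 * n ^ 2 * (16 * m ^ 4 + 40 * m ^ 2 + 1) - 64 * m ^ 6 - 48 * m ^ 4 + 28 * m ^ 2 + 1

/-- `J(m,n) < 0` for all positive integers `m > n`. -/
theorem J_neg (m n : ℕ) (hn : 0 < n) (hmn : n < m) : J (m : ℝ) (n : ℝ) < 0 := by
  have h1 : (1 : ℝ) ≤ n := by exact_mod_cast hn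
  have h2 : (n : ℝ) + 1 ≤ m := by exact_mod_cast hmn
  have h3 : (2 : ℝ) ≤ m := by linarith
  have hsq : (n : ℝ) ^ 2 ≤ ((m : ℝ) - 1) ^ 2 := by nlinarith
  have hP : (0 : ℝ) ≤ 16 * (m:ℝ) ^ 4 + 40 * (m:ℝ) ^ 2 + 1 := by positivity
  have hstep : 4 * (n:ℝ) ^ 2 * (16 * (m:ℝ) ^ 4 + 40 * (m:ℝ) ^ 2 + 1)
      ≤ 4 * ((m:ℝ) - 1) ^ 2 * (16 * (m:ℝ) ^ 4 + 40 * (m:ℝ) ^ 2 + 1) := by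
    nlinarith
  unfold J
  nlinarith [hstep, mul_nonneg (show (0:ℝ) ≤ (m:ℝ)^4 by positivity) (show (0:ℝ) ≤ (m:ℝ) - 2 by linarith),
    mul_nonneg (show (0:ℝ) ≤ (m:ℝ)^2 by positivity) (show (0:ℝ) ≤ (m:ℝ) - 2 by linarith),
    mul_nonneg (mul_nonneg (show (0:ℝ) ≤ (m:ℝ)^2 by positivity) (show (0:ℝ) ≤ (m:ℝ) - 2 by linarith)) (show (0:ℝ) ≤ (m:ℝ) - 2 by linarith)]
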